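/- arXiv:2311.07338 — 5 statements merged into one kernel-verified Lean document; each statement's English description precedes it below -/
import Mathlib

section
/- Let ω ∈ L¹(ℝ²) be radial, f 1-Lipschitz with f(0)=0, μ‖ω‖₁ < 1, and let Ψ(I) be the unique solution of Ψ(I) = I + μ ω ∗ f(Ψ(I)) in L^p(ℝ²). Then Ψ is E(2)-equivariant: Ψ(T_g I) = T_g Ψ(I) for every Euclidean motion g and every I ∈ L^p(ℝ²). In particular, if I is invariant under a subgroup Γ of E(2), then so is Ψ(I). -/
/-!
Since `ω` is radial, convolution with `ω` commutes with every Euclidean motion `g`, and `g`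
preserves Lebesgue measure; so `Ψ(I) ∘ g⁻¹` is an `L^p` solution of the fixed point equation with
input `I ∘ g⁻¹`, and it remains to see that this equation has at most one `L^p` solution. For two
solutions `u, v`, the difference `w = u - v` satisfies `|w| ≤ μ (|ω| ∗ |w|)` a.e. because `f` is
1-Lipschitz, and Young's inequality `‖|ω| ∗ |w|‖_p ≤ ‖ω‖₁ ‖w‖_p` turns this into
`‖w‖_p ≤ μ ‖ω‖₁ ‖w‖_p` with `μ ‖ω‖₁ < 1`, whence `w = 0`. Young's inequality itself follows from
Hölder's inequality with respect to the weight `|ω|`.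
-/

open MeasureTheory ContinuousLinearMap
open scoped Convolution ENNReal

theorem ENNReal.eq_zero_of_le_mul_of_lt_one {a κ : ℝ≥0∞} (h : a ≤ κ * a) (ha : a ≠ ∞)
    (hκ : κ < 1) : a = 0 := by
  by_contra h0
  have : κ * a < 1 * a := (ENNReal.mul_lt_mul_iff_left h0 ha).2 hκ
  exact (one_mul a ▸ this).not_ge h

namespace MeasureTheory

theorem ae_lt_top_of_eLpNorm_lt_top {α : Type*} [MeasurableSpace α] {ν : Measure α}
    {F : α → ℝ≥0∞} {p : ℝ≥0∞} (hp : p ≠ 0) (hF : AEMeasurable F ν) (h : eLpNorm F p ν < ∞) :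
    ∀ᵐ x ∂ν, F x < ∞ := by
  rcases eq_or_ne p ∞ with rfl | hp_top
  · filter_upwards [ae_le_eLpNormEssSup (f := F) (μ := ν)] with x hx
    rw [eLpNorm_exponent_top] at h
    exact (enorm_eq_self (F x) ▸ hx).trans_lt h
  · have hpos : 0 < p.toReal := ENNReal.toReal_pos hp hp_top
    have hint := lintegral_rpow_enorm_lt_top_of_eLpNorm_lt_top hp hp_top h
    simp only [enorm_eq_self] at hint
    filter_upwards [ae_lt_top' (hF.pow_const p.toReal) hint.ne] with x hx
    exact (ENNReal.rpow_lt_top_iff_of_pos hpos).1 hx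

section Convolution

variable {𝕜 E E' F G : Type*} [NontriviallyNormedField 𝕜] [NormedAddCommGroup E]
  [NormedAddCommGroup E'] [NormedAddCommGroup F] [NormedSpace 𝕜 E] [NormedSpace 𝕜 E']
  [NormedSpace 𝕜 F] [NormedSpace ℝ F] {L : E →L[𝕜] E' →L[𝕜] F} [MeasurableSpace G]
  {ν : Measure G} {f : G → E}

theorem ConvolutionExistsAt.distrib_sub [Sub G] {g g' : G → E'} {x : G}
    (hfg : ConvolutionExistsAt f g x L ν) (hfg' : ConvolutionExistsAt f g' x L ν) :
    (f ⋆[L, ν] (g - g')) x = (f ⋆[L, ν] g) x - (f ⋆[L, ν] g') x := by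
  simp only [convolution_def, (L _).map_sub, Pi.sub_apply, integral_sub hfg hfg']

theorem convolution_comp_sub_const [AddCommGroup G] (g : G → E') (a x : G) :
    (f ⋆[L, ν] fun y => g (y - a)) x = (f ⋆[L, ν] g) (x - a) := by
  simp only [convolution_def, sub_right_comm]

theorem convolution_comp_linearIsometryEquiv {V : Type*} [NormedAddCommGroup V]
    [InnerProductSpace ℝ V] [FiniteDimensional ℝ V] [MeasurableSpace V] [BorelSpace V]
    {f : V → E} (r : V ≃ₗᵢ[ℝ] V) (hf : ∀ x, f (r x) = f x) (g : V → E') (x : V) :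
    (f ⋆[L] (g ∘ r)) x = (f ⋆[L] g) (r x) := by
  simp only [convolution_def, Function.comp_apply, map_sub]
  conv_lhs => enter [2, t]; rw [← hf t]
  exact r.measurePreserving.integral_comp r.toHomeomorph.measurableEmbedding
    fun t => L (f t) (g (r x - t))

end Convolution

section LConvolution

variable {G : Type*} [AddCommGroup G] [MeasurableSpace G] {μ : Measure G} {f g : G → ℝ≥0∞}

theorem lconvolution_apply (x : G) : (f ⋆ₗ[μ] g) x = ∫⁻ y, f y * g (x - y) ∂μ := by
  simp only [lconvolution_def, neg_add_eq_sub]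

theorem enorm_convolution_le_lconvolution (ω h : G → ℝ) (x : G) :
    ‖(ω ⋆[lsmul ℝ ℝ, μ] h) x‖ₑ ≤ ((‖ω ·‖ₑ) ⋆ₗ[μ] (‖h ·‖ₑ)) x := by
  rw [convolution_def, lconvolution_apply]
  simpa only [lsmul_apply, smul_eq_mul, enorm_mul] using
    enorm_integral_le_lintegral_enorm (fun t => ω t * h (x - t))

variable [MeasurableAdd₂ G] [MeasurableNeg G] [SFinite μ] [μ.IsAddLeftInvariant]

theorem lintegral_lconvolution (hf : AEMeasurable f μ) (hg : AEMeasurable g μ) :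
    ∫⁻ x, (f ⋆ₗ[μ] g) x ∂μ = (∫⁻ x, f x ∂μ) * ∫⁻ x, g x ∂μ := by
  simp only [lconvolution_def]
  rw [lintegral_lintegral_swap (by fun_prop), ← lintegral_mul_const'' _ hf]
  refine lintegral_congr fun y => ?_
  rw [lintegral_add_left_eq_self (fun z => f y * g z) (-y), lintegral_const_mul'' _ hg]

theorem lconvolution_rpow_le {q : ℝ} (hq : 1 ≤ q) (hf : AEMeasurable f μ)
    (hg : AEMeasurable g μ) (x : G) :
    (f ⋆ₗ[μ] g) x ^ q ≤ (∫⁻ y, f y ∂μ) ^ (q - 1) * (f ⋆ₗ[μ] fun y => g y ^ q) x := by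
  have hq0 : 0 < q := by linarith
  have hq' : 0 ≤ 1 - q⁻¹ := sub_nonneg.2 (inv_le_one_of_one_le₀ hq)
  have hsplit (y : G) :
      f y * g (x - y) = f y ^ (1 - q⁻¹) * (f y * g (x - y) ^ q) ^ q⁻¹ := by
    rw [ENNReal.mul_rpow_of_nonneg _ _ (by positivity), ← ENNReal.rpow_mul,
      mul_inv_cancel₀ hq0.ne', ENNReal.rpow_one, ← mul_assoc,
      ← ENNReal.rpow_add_of_nonneg _ _ hq' (by positivity), sub_add_cancel, ENNReal.rpow_one]
  have holder := ENNReal.lintegral_mul_norm_pow_le hf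
    (hf.mul ((hg.comp_quasiMeasurePreserving (quasiMeasurePreserving_sub_left μ x)).pow_const q))
    hq' (by positivity) (sub_add_cancel 1 q⁻¹)
  simp only [lconvolution_apply, hsplit]
  calc _ ≤ ((∫⁻ y, f y ∂μ) ^ (1 - q⁻¹) * (∫⁻ y, f y * g (x - y) ^ q ∂μ) ^ q⁻¹) ^ q :=
        ENNReal.rpow_le_rpow holder hq0.le
    _ = _ := by
      rw [ENNReal.mul_rpow_of_nonneg _ _ hq0.le, ← ENNReal.rpow_mul, ← ENNReal.rpow_mul,
        inv_mul_cancel₀ hq0.ne', ENNReal.rpow_one, sub_mul, one_mul, inv_mul_cancel₀ hq0.ne']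

theorem lintegral_lconvolution_rpow_le {q : ℝ} (hq : 1 ≤ q) (hf : AEMeasurable f μ)
    (hg : AEMeasurable g μ) :
    ∫⁻ x, (f ⋆ₗ[μ] g) x ^ q ∂μ ≤ (∫⁻ x, f x ∂μ) ^ q * ∫⁻ x, g x ^ q ∂μ :=
  calc ∫⁻ x, (f ⋆ₗ[μ] g) x ^ q ∂μ
      ≤ ∫⁻ x, (∫⁻ y, f y ∂μ) ^ (q - 1) * (f ⋆ₗ[μ] fun y => g y ^ q) x ∂μ :=
        lintegral_mono fun x => lconvolution_rpow_le hq hf hg x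
    _ = (∫⁻ x, f x ∂μ) ^ (q - 1) * ((∫⁻ x, f x ∂μ) * ∫⁻ x, g x ^ q ∂μ) := by
        rw [lintegral_const_mul'' _ (aemeasurable_lconvolution hf (hg.pow_const q)),
          lintegral_lconvolution hf (hg.pow_const q)]
    _ = (∫⁻ x, f x ∂μ) ^ q * ∫⁻ x, g x ^ q ∂μ := by
        have hpow (a : ℝ≥0∞) : a ^ (q - 1) * a = a ^ q := by
          conv_rhs => rw [← sub_add_cancel q 1,
            ENNReal.rpow_add_of_nonneg _ _ (by linarith) zero_le_one, ENNReal.rpow_one]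
        rw [← mul_assoc, hpow]

theorem lconvolution_le_mul_essSup (hf : AEMeasurable f μ) (x : G) :
    (f ⋆ₗ[μ] g) x ≤ (∫⁻ y, f y ∂μ) * essSup g μ := by
  rw [lconvolution_apply, ← lintegral_mul_const'' _ hf]
  refine lintegral_mono_ae ?_
  filter_upwards [(quasiMeasurePreserving_sub_left μ x).ae (ENNReal.ae_le_essSup g)] with y hy
  exact mul_le_mul_right hy _

theorem eLpNorm_lconvolution_le {p : ℝ≥0∞} (hp : 1 ≤ p) (hf : AEMeasurable f μ)
    (hg : AEMeasurable g μ) :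
    eLpNorm (f ⋆ₗ[μ] g) p μ ≤ (∫⁻ x, f x ∂μ) * eLpNorm g p μ := by
  rcases eq_or_ne p ∞ with rfl | hp_top
  · simp only [eLpNorm_exponent_top, eLpNormEssSup, enorm_eq_self]
    exact essSup_le_of_ae_le _ (ae_of_all _ (lconvolution_le_mul_essSup hf))
  · have hp0 : p ≠ 0 := (zero_lt_one.trans_le hp).ne'
    have hq : 1 ≤ p.toReal := by simpa using ENNReal.toReal_mono hp_top hp
    simp only [eLpNorm_eq_lintegral_rpow_enorm_toReal hp0 hp_top, enorm_eq_self]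
    have hq0 : 0 ≤ 1 / p.toReal := by positivity
    calc (∫⁻ x, (f ⋆ₗ[μ] g) x ^ p.toReal ∂μ) ^ (1 / p.toReal)
        ≤ ((∫⁻ x, f x ∂μ) ^ p.toReal * ∫⁻ x, g x ^ p.toReal ∂μ) ^ (1 / p.toReal) :=
          ENNReal.rpow_le_rpow (lintegral_lconvolution_rpow_le hq hf hg) hq0
      _ = (∫⁻ x, f x ∂μ) * (∫⁻ x, g x ^ p.toReal ∂μ) ^ (1 / p.toReal) := by
          rw [ENNReal.mul_rpow_of_nonneg _ _ hq0, ← ENNReal.rpow_mul,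
            mul_one_div_cancel (by linarith), ENNReal.rpow_one]

theorem MemLp.ae_convolutionExistsAt {p : ℝ≥0∞} (hp : 1 ≤ p) {ω h : G → ℝ}
    (hω : Integrable ω μ) (hh : MemLp h p μ) :
    ∀ᵐ x ∂μ, ConvolutionExistsAt ω h x (lsmul ℝ ℝ) μ := by
  have hfin : eLpNorm ((‖ω ·‖ₑ) ⋆ₗ[μ] (‖h ·‖ₑ)) p μ < ∞ :=
    (eLpNorm_lconvolution_le hp hω.1.enorm hh.1.enorm).trans_lt
      (ENNReal.mul_lt_top hω.2 ((eLpNorm_enorm h).symm ▸ hh.2))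
  filter_upwards [ae_lt_top_of_eLpNorm_lt_top (zero_lt_one.trans_le hp).ne'
    (aemeasurable_lconvolution hω.1.enorm hh.1.enorm) hfin] with x hx
  simp only [ConvolutionExistsAt, lsmul_apply, smul_eq_mul]
  refine ⟨hω.1.mul (hh.1.comp_quasiMeasurePreserving (quasiMeasurePreserving_sub_left μ x)), ?_⟩
  simpa only [HasFiniteIntegral, enorm_mul, lconvolution_apply] using hx

theorem ae_eq_of_convolution_fixedPoint {p : ℝ≥0∞} (hp : 1 ≤ p) {ω : G → ℝ}
    (hω : Integrable ω μ) {K : NNReal} {f : ℝ → ℝ} (hf : LipschitzWith K f) (hf0 : f 0 = 0)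
    {c : ℝ} (hc : ‖c‖ * K * ∫ x, ‖ω x‖ ∂μ < 1) {I u v : G → ℝ}
    (hu : MemLp u p μ) (hv : MemLp v p μ)
    (hue : u =ᵐ[μ] fun x => I x + c * (ω ⋆[lsmul ℝ ℝ, μ] (f ∘ u)) x)
    (hve : v =ᵐ[μ] fun x => I x + c * (ω ⋆[lsmul ℝ ℝ, μ] (f ∘ v)) x) :
    u =ᵐ[μ] v := by
  have hp0 : p ≠ 0 := (zero_lt_one.trans_le hp).ne'
  have hfu := hf.comp_memLp hf0 hu
  have hfv := hf.comp_memLp hf0 hv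
  have hpt : ∀ᵐ x ∂μ, ‖(u - v) x‖ₑ ≤
      ‖c‖₊ * ‖((‖ω ·‖ₑ) ⋆ₗ[μ] (‖(f ∘ u - f ∘ v) ·‖ₑ)) x‖ₑ := by
    filter_upwards [hue, hve, hfu.ae_convolutionExistsAt hp hω, hfv.ae_convolutionExistsAt hp hω]
      with x hux hvx hcu hcv
    have hdiff : (u - v) x = c * (ω ⋆[lsmul ℝ ℝ, μ] (f ∘ u - f ∘ v)) x := by
      rw [Pi.sub_apply, hux, hvx, hcu.distrib_sub hcv]
      ring
    rw [hdiff, enorm_mul, enorm_eq_self]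
    exact mul_le_mul_right (enorm_convolution_le_lconvolution ω _ x) _
  have hlip : ∀ x, ‖(f ∘ u - f ∘ v) x‖₊ ≤ K * ‖(u - v) x‖₊ := fun x =>
    enorm_le_coe.mp (hf (u x) (v x))
  have hκ : ‖c‖ₑ * K * ∫⁻ x, ‖ω x‖ₑ ∂μ < 1 := by
    have := ENNReal.ofReal_lt_one.2 hc
    rwa [ENNReal.ofReal_mul (by positivity), ENNReal.ofReal_mul (by positivity),
      ofReal_norm, ENNReal.ofReal_coe_nnreal,
      ofReal_integral_norm_eq_lintegral_enorm hω] at this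
  have hcontr : eLpNorm (u - v) p μ ≤ (‖c‖ₑ * K * ∫⁻ x, ‖ω x‖ₑ ∂μ) * eLpNorm (u - v) p μ :=
    calc eLpNorm (u - v) p μ
        ≤ ‖c‖₊ * eLpNorm ((‖ω ·‖ₑ) ⋆ₗ[μ] (‖(f ∘ u - f ∘ v) ·‖ₑ)) p μ :=
          eLpNorm_le_nnreal_smul_eLpNorm_of_ae_le_mul' hpt p
      _ ≤ ‖c‖₊ * ((∫⁻ x, ‖ω x‖ₑ ∂μ) * eLpNorm (f ∘ u - f ∘ v) p μ) := by
          grw [eLpNorm_lconvolution_le hp hω.1.enorm (hfu.1.sub hfv.1).enorm, eLpNorm_enorm]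
      _ ≤ ‖c‖₊ * ((∫⁻ x, ‖ω x‖ₑ ∂μ) * (K * eLpNorm (u - v) p μ)) := by
          grw [eLpNorm_le_nnreal_smul_eLpNorm_of_ae_le_mul (ae_of_all _ hlip) p]
          rfl
      _ = _ := by rw [← enorm_eq_nnnorm]; ring
  have hzero := ENNReal.eq_zero_of_le_mul_of_lt_one hcontr (hu.sub hv).2.ne hκ
  filter_upwards [(eLpNorm_eq_zero_iff (hu.1.sub hv.1) hp0).1 hzero] with x hx
  exact sub_eq_zero.1 hx

end LConvolution

end MeasureTheory

/-- The input-to-stationary-output map `Ψ`, defined by the fixed point equation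
`Ψ(I) = I + μ ω ∗ f(Ψ(I))` with a radial kernel `ω` and `μ‖ω‖₁ < 1`, is `E(2)`-equivariant:
`Ψ(T_g I) = T_g Ψ(I)` (a.e.) for every Euclidean motion `g = (a, r)`. -/
theorem Psi_equivariant
    (p : ℝ≥0∞) (hp : 1 ≤ p)
    (ω : EuclideanSpace ℝ (Fin 2) → ℝ) (hω : Integrable ω)
    (hrad : ∀ (r : EuclideanSpace ℝ (Fin 2) ≃ₗᵢ[ℝ] EuclideanSpace ℝ (Fin 2))
      (x : EuclideanSpace ℝ (Fin 2)), ω (r x) = ω x)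
    (f : ℝ → ℝ) (hf : LipschitzWith 1 f) (hf0 : f 0 = 0)
    (μ : ℝ) (hμ0 : 0 < μ) (hμ : μ * (∫ x, |ω x|) < 1)
    (Ψ : (EuclideanSpace ℝ (Fin 2) → ℝ) → (EuclideanSpace ℝ (Fin 2) → ℝ))
    (hΨmem : ∀ I, MemLp I p volume → MemLp (Ψ I) p volume)
    (hΨ : ∀ I, MemLp I p volume →
      Ψ I =ᵐ[volume] fun x => I x + μ * (ω ⋆ (f ∘ Ψ I)) x) :
    ∀ I, MemLp I p volume →
      ∀ (a : EuclideanSpace ℝ (Fin 2))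
        (r : EuclideanSpace ℝ (Fin 2) ≃ₗᵢ[ℝ] EuclideanSpace ℝ (Fin 2)),
        Ψ (fun x => I (r.symm (x - a))) =ᵐ[volume] fun x => Ψ I (r.symm (x - a)) := by
  intro I hI a r
  set φ := fun x => r.symm (x - a)
  have hφ : MeasurePreserving φ volume volume :=
    r.symm.measurePreserving.comp (measurePreserving_sub_right volume a)
  have hconv (g : EuclideanSpace ℝ (Fin 2) → ℝ) (x) : (ω ⋆ (g ∘ φ)) x = (ω ⋆ g) (φ x) :=
    (convolution_comp_sub_const (g ∘ r.symm) a x).trans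
      (convolution_comp_linearIsometryEquiv r.symm (hrad r.symm) g (x - a))
  have hμω : ‖μ‖ * (1 : NNReal) * ∫ x, ‖ω x‖ < 1 := by
    simpa [Real.norm_of_nonneg hμ0.le, Real.norm_eq_abs] using hμ
  have hIφ : MemLp (I ∘ φ) p volume := hI.comp_measurePreserving hφ
  refine ae_eq_of_convolution_fixedPoint hp hω hf hf0 hμω (hΨmem _ hIφ)
    ((hΨmem I hI).comp_measurePreserving hφ) (hΨ _ hIφ) ?_
  filter_upwards [hφ.quasiMeasurePreserving.ae_eq_comp (hΨ I hI)] with x hx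
  exact hx.trans (congrArg (I (φ x) + μ * ·) (hconv (f ∘ Ψ I) x).symm)
end

section
/- Let ω ∈ L¹(ℝ²)∩C^∞ be radial and f : ℝ → ℝ odd, 1-Lipschitz with f(0)=0, and let 2μ‖ω‖₁ < 1. Let P_F(x₁,x₂) = cos(2πλx₂) and let a_F ∈ L^∞(ℝ²) be the unique solution of a_F = P_F + μ ω ∗ f(a_F). Then the zero set of a_F equals the zero set of P_F: a_F(x) = 0 if and only if cos(2πλx₂) = 0. -/
open MeasureTheory
open scoped Convolution Real

noncomputable section

/-- For an odd 1-Lipschitz response `f`, a smooth radial kernel `ω` with `2μ‖ω‖₁ < 1`, and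
the funnel input `P_F(x) = cos(2πλx₂)`, the bounded stationary state
`a_F = P_F + μ ω ∗ f(a_F)` has exactly the same zero set as `P_F`. -/
theorem zero_set_stationary_funnel
    (ω : EuclideanSpace ℝ (Fin 2) → ℝ) (hω : Integrable ω) (hωsm : ContDiff ℝ (⊤ : ℕ∞) ω)
    (hrad : ∀ (r : EuclideanSpace ℝ (Fin 2) ≃ₗᵢ[ℝ] EuclideanSpace ℝ (Fin 2))
      (x : EuclideanSpace ℝ (Fin 2)), ω (r x) = ω x)
    (f : ℝ → ℝ) (hf : LipschitzWith 1 f) (hodd : ∀ s, f (-s) = -f s) (hf0 : f 0 = 0)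
    (μ : ℝ) (hμ0 : 0 < μ) (hμ : 2 * μ * (∫ x, |ω x|) < 1)
    (lam : ℝ) (hlam : 0 < lam)
    (aF : EuclideanSpace ℝ (Fin 2) → ℝ) (haFm : Measurable aF)
    (haFb : ∃ C, ∀ x, |aF x| ≤ C)
    (heq : ∀ x : EuclideanSpace ℝ (Fin 2),
      aF x = Real.cos (2 * π * lam * x 1) + μ * (ω ⋆ (f ∘ aF)) x) :
    ∀ x : EuclideanSpace ℝ (Fin 2), aF x = 0 ↔ Real.cos (2 * π * lam * x 1) = 0 := by
  classical
  obtain ⟨C, hC⟩ := haFb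
  have hC0 : 0 ≤ C := (abs_nonneg _).trans (hC 0)
  set N : ℝ := ∫ z, |ω z| with hNdef
  have hN0 : 0 ≤ N := integral_nonneg fun z => abs_nonneg _
  have hq1 : μ * N < 1 / 2 := by linarith
  have hq0 : 0 ≤ μ * N := mul_nonneg hμ0.le hN0
  have hlip : ∀ a b : ℝ, |f a - f b| ≤ |a - b| := by
    intro a b
    have := hf.dist_le_mul a b
    simpa [Real.dist_eq] using this
  have hfbd : ∀ t : ℝ, |f t| ≤ |t| := by
    intro t; simpa [hf0] using hlip t 0
  intro x
  set s : ℝ := x 1 with hsdef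
  set c : ℝ := Real.cos (2 * π * lam * s) with hcdef
  -- the linear reflection negating the second coordinate
  set r : EuclideanSpace ℝ (Fin 2) ≃ₗᵢ[ℝ] EuclideanSpace ℝ (Fin 2) :=
    LinearIsometryEquiv.piLpCongrRight 2
      (fun i : Fin 2 => if i = 1 then LinearIsometryEquiv.neg ℝ else
        LinearIsometryEquiv.refl ℝ ℝ) with hrdef
  have hrapp : ∀ (t : EuclideanSpace ℝ (Fin 2)) (i : Fin 2),
      r t i = if i = 1 then -(t i) else t i := by
    intro t i
    by_cases h : i = 1
    · subst h; simp [hrdef]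
    · simp [hrdef, h]
  -- the affine reflection about the line x₂ = s
  set v : EuclideanSpace ℝ (Fin 2) :=
    (WithLp.equiv 2 (Fin 2 → ℝ)).symm (fun i => if i = 1 then 2 * s else 0) with hvdef
  set R : EuclideanSpace ℝ (Fin 2) → EuclideanSpace ℝ (Fin 2) := fun y => v + r y with hRdef
  have hRapp : ∀ (y : EuclideanSpace ℝ (Fin 2)) (i : Fin 2),
      R y i = if i = 1 then 2 * s - y i else y i := by
    intro y i
    have hadd : R y i = v i + r y i := rfl
    have hv : v i = if i = 1 then 2 * s else 0 := rfl
    rw [hadd, hv, hrapp]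
    by_cases h : i = 1
    · subst h; simp; ring
    · simp [h]
  have hRx : R x = x := by
    ext i
    rw [hRapp]
    by_cases h : i = 1
    · subst h; rw [if_pos rfl, ← hsdef]; ring
    · rw [if_neg h]
  have hRsub : ∀ y t : EuclideanSpace ℝ (Fin 2), R (y - t) = R y - r t := by
    intro y t
    ext i
    have h1 : (R y - r t) i = R y i - r t i := rfl
    have h2 : (y - t) i = y i - t i := rfl
    rw [h1, hRapp, hRapp, hrapp, h2]
    by_cases h : i = 1 <;> simp [h] <;> ring
  set b : EuclideanSpace ℝ (Fin 2) → ℝ := fun y => -aF (R y) with hbdef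
  have hRm : Measurable R := (continuous_const.add r.continuous).measurable
  have hbm : Measurable b := (haFm.comp hRm).neg
  have hbC : ∀ y, |b y| ≤ C := fun y => by simpa [hbdef] using hC (R y)
  set u : EuclideanSpace ℝ (Fin 2) → ℝ := fun y => aF y - b y with hudef
  have huC : ∀ y, |u y| ≤ 2 * C := by
    intro y
    have h1 := abs_sub (aF y) (b y)
    have := hC y
    have := hbC y
    simp only [hudef]
    linarith
  set T : ℝ := sSup (Set.range fun y => |u y|) with hTdef
  have hbddT : BddAbove (Set.range fun y => |u y|) :=
    ⟨2 * C, by rintro z ⟨y, rfl⟩; exact huC y⟩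
  have huT : ∀ y, |u y| ≤ T := fun y => le_csSup hbddT ⟨y, rfl⟩
  have hT0 : 0 ≤ T := (abs_nonneg _).trans (huT x)
  -- integrability
  have hint : ∀ (g : EuclideanSpace ℝ (Fin 2) → ℝ), Measurable g → (∀ z, |g z| ≤ C) →
      ∀ y, Integrable fun t => ω t * g (y - t) := by
    intro g hg hgC y
    have hm : AEStronglyMeasurable (fun t => g (y - t)) volume :=
      (hg.comp (measurable_const.sub measurable_id)).aestronglyMeasurable
    have := hω.bdd_mul hm (Filter.Eventually.of_forall fun t => by simpa [Real.norm_eq_abs] using hgC (y - t))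
    simpa [mul_comm] using this
  have hfaC : ∀ z, |f (aF z)| ≤ C := fun z => (hfbd _).trans (hC z)
  have hfbC : ∀ z, |f (b z)| ≤ C := fun z => (hfbd _).trans (hbC z)
  have hfam : Measurable fun z => f (aF z) := hf.continuous.measurable.comp haFm
  have hfbm : Measurable fun z => f (b z) := hf.continuous.measurable.comp hbm
  have hint1 : ∀ y, Integrable fun t => ω t * f (aF (y - t)) := hint _ hfam hfaC
  have hint2 : ∀ y, Integrable fun t => ω t * f (b (y - t)) := hint _ hfbm hfbC
  -- unfold the convolution
  have hconv : ∀ y, (ω ⋆ (f ∘ aF)) y = ∫ t, ω t * f (aF (y - t)) := by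
    intro y
    rw [convolution_def]
    simp [ContinuousLinearMap.lsmul_apply, smul_eq_mul, Function.comp]
  -- change of variables
  have hIstar : ∀ y, (∫ t, ω t * f (aF (R y - t))) = -∫ t, ω t * f (b (y - t)) := by
    intro y
    have hcv : (∫ t, ω (r t) * f (aF (R y - r t))) = ∫ t, ω t * f (aF (R y - t)) :=
      r.measurePreserving.integral_comp r.toHomeomorph.measurableEmbedding
        (fun t => ω t * f (aF (R y - t)))
    rw [← hcv]
    have hpt : ∀ t, ω (r t) * f (aF (R y - r t)) = -(ω t * f (b (y - t))) := by
      intro t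
      rw [hrad r t, ← hRsub y t]
      have hb : aF (R (y - t)) = -(b (y - t)) := by simp [hbdef]
      rw [hb, hodd]
      ring
    simp_rw [hpt]
    exact integral_neg _
  -- the reflected state solves the reflected equation
  have hbeq : ∀ y, b y = -(Real.cos (2 * π * lam * (2 * s - y 1)))
      + μ * ∫ t, ω t * f (b (y - t)) := by
    intro y
    have h1 := heq (R y)
    rw [hconv (R y)] at h1
    have h2 : R y 1 = 2 * s - y 1 := by rw [hRapp]; simp
    rw [h2, hIstar y] at h1
    simp only [hbdef]
    rw [h1]
    ring
  have hkey : ∀ y, u y = (Real.cos (2 * π * lam * (y 1))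
      + Real.cos (2 * π * lam * (2 * s - y 1)))
      + μ * ∫ t, ω t * (f (aF (y - t)) - f (b (y - t))) := by
    intro y
    have h1 := heq y
    rw [hconv y] at h1
    have h3 : (∫ t, ω t * (f (aF (y - t)) - f (b (y - t))))
        = (∫ t, ω t * f (aF (y - t))) - ∫ t, ω t * f (b (y - t)) := by
      rw [← integral_sub (hint1 y) (hint2 y)]
      congr 1; funext t; ring
    simp only [hudef]
    rw [h1, hbeq y, h3]
    ring
  have hIbound : ∀ y, |∫ t, ω t * (f (aF (y - t)) - f (b (y - t)))| ≤ N * T := by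
    intro y
    have h1 : (∫ t, |ω t * (f (aF (y - t)) - f (b (y - t)))|) ≤ ∫ t, |ω t| * T := by
      apply integral_mono_of_nonneg
      · exact Filter.Eventually.of_forall fun t => abs_nonneg _
      · exact hω.abs.mul_const T
      · refine Filter.Eventually.of_forall fun t => ?_
        show |ω t * (f (aF (y - t)) - f (b (y - t)))| ≤ |ω t| * T
        rw [abs_mul]
        refine mul_le_mul_of_nonneg_left ((hlip _ _).trans ?_) (abs_nonneg _)
        simpa [hudef] using huT (y - t)
    calc |∫ t, ω t * (f (aF (y - t)) - f (b (y - t)))|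
        ≤ ∫ t, |ω t * (f (aF (y - t)) - f (b (y - t)))| :=
          norm_integral_le_integral_norm (fun t => ω t * (f (aF (y - t)) - f (b (y - t))))
      _ ≤ ∫ t, |ω t| * T := h1
      _ = N * T := by rw [integral_mul_const]
  have hcosb : ∀ y : EuclideanSpace ℝ (Fin 2), |Real.cos (2 * π * lam * (y 1))
      + Real.cos (2 * π * lam * (2 * s - y 1))| ≤ 2 * |c| := by
    intro y
    have h := Real.cos_add_cos (2 * π * lam * (y 1)) (2 * π * lam * (2 * s - y 1))
    have h2 : (2 * π * lam * (y 1) + 2 * π * lam * (2 * s - y 1)) / 2 = 2 * π * lam * s := by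
      ring
    rw [h2, ← hcdef] at h
    rw [h]
    have h3 : |2 * c * Real.cos ((2 * π * lam * y 1 - 2 * π * lam * (2 * s - y 1)) / 2)|
        = 2 * |c| * |Real.cos ((2 * π * lam * y 1 - 2 * π * lam * (2 * s - y 1)) / 2)| := by
      rw [abs_mul, abs_mul, abs_two]
    rw [h3]
    have h4 := Real.abs_cos_le_one ((2 * π * lam * y 1 - 2 * π * lam * (2 * s - y 1)) / 2)
    nlinarith [abs_nonneg c]
  have hboundT : T ≤ 2 * |c| + μ * (N * T) := by
    refine csSup_le ⟨|u x|, ⟨x, rfl⟩⟩ ?_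
    rintro z ⟨y, rfl⟩
    show |u y| ≤ 2 * |c| + μ * (N * T)
    rw [hkey y]
    have h1 := hcosb y
    have h3 : |μ * ∫ t, ω t * (f (aF (y - t)) - f (b (y - t)))| ≤ μ * (N * T) := by
      rw [abs_mul, abs_of_pos hμ0]
      exact mul_le_mul_of_nonneg_left (hIbound y) hμ0.le
    calc |(Real.cos (2 * π * lam * (y 1)) + Real.cos (2 * π * lam * (2 * s - y 1)))
          + μ * ∫ t, ω t * (f (aF (y - t)) - f (b (y - t)))|
        ≤ |Real.cos (2 * π * lam * (y 1)) + Real.cos (2 * π * lam * (2 * s - y 1))|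
          + |μ * ∫ t, ω t * (f (aF (y - t)) - f (b (y - t)))| := abs_add_le _ _
      _ ≤ 2 * |c| + μ * (N * T) := add_le_add h1 h3
  -- evaluation at x
  have hux : u x = 2 * aF x := by
    simp only [hudef, hbdef, hRx]
    ring
  have hkx := hkey x
  have hE := hIbound x
  set I : ℝ := ∫ t, ω t * (f (aF (x - t)) - f (b (x - t))) with hIdef
  rw [hux, ← hsdef] at hkx
  have h2s : 2 * s - s = s := by ring
  rw [h2s, ← hcdef] at hkx
  -- hkx : 2 * aF x = (c + c) + μ * I
  have hfinal : |2 * aF x - 2 * c| ≤ μ * (N * T) := by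
    have h5 : 2 * aF x - 2 * c = μ * I := by rw [hkx]; ring
    rw [h5, abs_mul, abs_of_pos hμ0]
    exact mul_le_mul_of_nonneg_left hE hμ0.le
  constructor
  · intro h0
    have habs : 2 * |c| ≤ μ * (N * T) := by
      have h6 : |2 * aF x - 2 * c| = 2 * |c| := by
        rw [h0, show (2:ℝ) * 0 - 2 * c = -(2 * c) by ring, abs_neg, abs_mul, abs_two]
      rw [h6] at hfinal
      exact hfinal
    have hTle : T ≤ 0 := by
      by_contra hT
      push_neg at hT
      have h7 := mul_lt_mul_of_pos_right hq1 hT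
      linarith [habs, hboundT, h7]
    have hTeq : T = 0 := le_antisymm hTle hT0
    have h8 : 2 * |c| ≤ 0 := by
      rw [hTeq] at habs; simpa using habs
    have : |c| = 0 := le_antisymm (by linarith) (abs_nonneg c)
    exact abs_eq_zero.mp this
  · intro hc0
    have hcz : |c| = 0 := by rw [hc0, abs_zero]
    have hTle : T ≤ 0 := by
      by_contra hT
      push_neg at hT
      have h7 := mul_lt_mul_of_pos_right hq1 hT
      linarith [hboundT, h7, hcz]
    have hTeq : T = 0 := le_antisymm hTle hT0
    have h8 : |2 * aF x - 2 * c| ≤ 0 := by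
      rw [hTeq] at hfinal; simpa using hfinal
    have h9 : 2 * aF x - 2 * c = 0 := abs_eq_zero.mp (le_antisymm h8 (abs_nonneg _))
    rw [hc0] at h9
    linarith
end
end

section
/- Let ω₁ ∈ 𝒮(ℝ) be a Schwartz kernel with real Fourier transform ω̂₁ satisfying μ ω̂₁(ξ) < 1 for all ξ ∈ ℝ. Then for every tempered distribution I ∈ 𝒮'(ℝ) there is a unique b ∈ 𝒮'(ℝ) solving b = I + μ ω₁ ∗ b, and it is given by b = I + μ K ∗ I where K ∈ 𝒮(ℝ) has Fourier transform K̂(ξ) = ω̂₁(ξ)/(1 − μ ω̂₁(ξ)). -/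
/-!
On the Fourier side, convolution with `ω₁` is multiplication by `ω̂₁`, and `μ Re ω̂₁ < 1` makes
`1 - μ ω̂₁` nonvanishing. Its reciprocal is a smooth function of the Schwartz function `μ ω̂₁`,
whose values stay in a compact set avoiding `1`, hence has temperate growth; so
`K = 𝓕⁻¹(ω̂₁ / (1 - μ ω̂₁))` is a Schwartz function with `K̂ = ω̂₁ + μ K̂ ω̂₁`. For the correlation
operators `A φ = ∫ ω₁(y) φ(· + y) dy` and `B φ = ∫ K(y) φ(· + y) dy` on test functions this says
that `1 + μ B` is a two-sided inverse of `1 - μ A`, and dually `b = I + μ b ∘ A` holds iff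
`b = I ∘ (1 + μ B)`.
-/

open MeasureTheory FourierTransform Filter Topology
open scoped SchwartzMap ContDiff

/-- `hBA` and `hAB` say that `1 + μ B` is a two-sided inverse of `1 - μ A`. -/
theorem forall_eq_add_smul_iff_of_resolvent {R V W F G : Type*} [CommRing R]
    [AddCommGroup V] [Module R V] [AddCommGroup W] [Module R W]
    [FunLike F V W] [LinearMapClass F R V W] [FunLike G V V] [LinearMapClass G R V V]
    {A B : G} {μ : R} (hBA : ∀ φ, B φ = A φ + μ • B (A φ)) (hAB : ∀ φ, B φ = A φ + μ • A (B φ))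
    (b I : F) : (∀ φ, b φ = I φ + μ • b (A φ)) ↔ ∀ φ, b φ = I φ + μ • I (B φ) := by
  constructor
  · intro hb φ
    have hinv : φ + μ • B φ - μ • A (φ + μ • B φ) = φ := by
      rw [map_add, map_smul, ← hAB φ, add_sub_cancel_right]
    calc b φ = b (φ + μ • B φ - μ • A (φ + μ • B φ)) := by rw [hinv]
      _ = I (φ + μ • B φ) := by rw [map_sub, map_smul, hb (φ + μ • B φ), add_sub_cancel_right]
      _ = I φ + μ • I (B φ) := by rw [map_add, map_smul]
  · intro hb φ
    rw [hb, hb (A φ), hBA φ, map_add, map_smul]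

namespace SchwartzMap

section TemperateGrowth

variable {E F G : Type*} [NormedAddCommGroup E] [NormedSpace ℝ E]
  [NormedAddCommGroup F] [NormedSpace ℝ F] [NormedAddCommGroup G] [NormedSpace ℝ G]

theorem exists_pos_forall_le_norm_sub [ProperSpace E] (f : 𝓢(E, F)) {a : F} (ha₀ : a ≠ 0)
    (ha : ∀ x, f x ≠ a) : ∃ δ > 0, ∀ x, δ ≤ ‖f x - a‖ := by
  set v : E → ℝ := fun x ↦ min ‖f x - a‖ (‖a‖ / 2)
  have hv : Continuous v := by fun_prop
  have hlim : Tendsto (fun x ↦ ‖f x - a‖) (cocompact E) (𝓝 ‖a‖) := by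
    simpa using ((tendsto_cocompact f).sub_const a).norm
  have hev : ∀ᶠ x in cocompact E, v 0 ≤ v x := by
    filter_upwards [hlim.eventually (eventually_ge_nhds (half_lt_self (norm_pos_iff.2 ha₀)))]
      with x hx
    simp only [v, min_eq_right hx, min_le_right]
  obtain ⟨x₀, hx₀⟩ := hv.exists_forall_le' 0 hev
  exact ⟨v x₀, lt_min (norm_pos_iff.2 (sub_ne_zero.2 (ha x₀))) (half_pos (norm_pos_iff.2 ha₀)),
    fun x ↦ (hx₀ x).trans (min_le_left _ _)⟩

theorem hasTemperateGrowth_comp_of_contDiffOn {g : F → G} {U S : Set F} (hU : IsOpen U)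
    (hg : ContDiffOn ℝ ∞ g U) (hS : IsCompact S) (hSU : S ⊆ U) (f : 𝓢(E, F))
    (hfS : ∀ x, f x ∈ S) : (g ∘ f).HasTemperateGrowth := by
  have hfU : Set.range f ⊆ U := Set.range_subset_iff.2 fun x ↦ hSU (hfS x)
  refine ⟨hg.comp_contDiff (f.smooth ⊤) fun x ↦ hfU ⟨x, rfl⟩, fun n ↦ ⟨0, ?_⟩⟩
  have hgC : ∀ i, ∀ᶠ C in atTop, ∀ y ∈ S, ‖iteratedFDerivWithin ℝ i g U y‖ ≤ C := fun i ↦ by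
    obtain ⟨C, hC⟩ := hS.exists_bound_of_continuousOn
      ((hg.continuousOn_iteratedFDerivWithin (mod_cast le_top) hU.uniqueDiffOn).mono hSU)
    filter_upwards [eventually_ge_atTop C] with C' hC' y hy using (hC y hy).trans hC'
  have hfD : ∀ i, ∀ᶠ D in atTop, ∀ x, ‖iteratedFDeriv ℝ i f x‖ ≤ D := fun i ↦ by
    filter_upwards [eventually_ge_atTop (SchwartzMap.seminorm ℝ 0 i f)] with D hD x
    simpa using (f.norm_iteratedFDeriv_le_seminorm ℝ i x).trans hD
  obtain ⟨C, hC⟩ := ((eventually_all_finset (Finset.range (n + 1))).2 fun i _ ↦ hgC i).exists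
  obtain ⟨D, hD, hD₁⟩ := (((eventually_all_finset (Finset.range (n + 1))).2 fun i _ ↦ hfD i).and
    (eventually_ge_atTop 1)).exists
  refine ⟨n.factorial * C * D ^ n, fun x ↦ ?_⟩
  simpa using norm_iteratedFDeriv_comp_le' hfU hU.uniqueDiffOn hg (f.smooth ⊤) (mod_cast le_top) x
    (fun i hi ↦ hC i (Finset.mem_range_succ_iff.2 hi) (f x) (hfS x))
    (fun i hi hin ↦ (hD i (Finset.mem_range_succ_iff.2 hin) x).trans (le_self_pow₀ hD₁ (by omega)))

theorem hasTemperateGrowth_inv_one_sub [ProperSpace E] (f : 𝓢(E, ℂ)) (hf : ∀ x, f x ≠ 1) :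
    (fun x ↦ (1 - f x)⁻¹).HasTemperateGrowth := by
  obtain ⟨δ, hδ, hfδ⟩ := f.exists_pos_forall_le_norm_sub one_ne_zero hf
  refine hasTemperateGrowth_comp_of_contDiffOn (g := fun z : ℂ ↦ (1 - z)⁻¹) (U := {1}ᶜ)
    (S := Metric.closedBall 0 (SchwartzMap.seminorm ℝ 0 0 f) ∩ {z | δ ≤ ‖z - 1‖})
    isOpen_compl_singleton ?_ ?_ ?_ f fun x ↦ ⟨?_, hfδ x⟩
  · exact (contDiffOn_const.sub contDiffOn_id).inv fun z hz ↦ sub_ne_zero.2 (Ne.symm hz)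
  · exact (isCompact_closedBall _ _).inter_right (isClosed_le continuous_const (by fun_prop))
  · rintro z ⟨-, hz⟩ rfl
    simp only [Set.mem_ofPred_eq, sub_self, norm_zero] at hz
    linarith
  · exact mem_closedBall_zero_iff.2 (f.norm_le_seminorm ℝ x)

end TemperateGrowth

section Fourier

variable {E : Type*} [NormedAddCommGroup E] [InnerProductSpace ℝ E] [FiniteDimensional ℝ E]
  [MeasurableSpace E] [BorelSpace E]

theorem exists_fourier_eq_div_one_sub (f : 𝓢(E, ℂ)) (c : ℂ)
    (hf : ∀ ξ, c * 𝓕 (f : E → ℂ) ξ ≠ 1) :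
    ∃ K : 𝓢(E, ℂ), ∀ ξ, 𝓕 (K : E → ℂ) ξ = 𝓕 (f : E → ℂ) ξ / (1 - c * 𝓕 (f : E → ℂ) ξ) := by
  have hcf : ∀ ξ, (c • 𝓕 f) ξ ≠ 1 := by simpa [fourier_coe] using hf
  refine ⟨𝓕⁻ (smulLeftCLM ℂ (fun ξ ↦ (1 - (c • 𝓕 f) ξ)⁻¹) (𝓕 f)), fun ξ ↦ ?_⟩
  rw [← fourier_coe, fourier_fourierInv_eq,
    smulLeftCLM_apply_apply ((c • 𝓕 f).hasTemperateGrowth_inv_one_sub hcf)]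
  simp [fourier_coe, div_eq_inv_mul]

noncomputable def correlation (g : 𝓢(E, ℂ)) : 𝓢(E, ℂ) →L[ℂ] 𝓢(E, ℂ) :=
  convolution (ContinuousLinearMap.mul ℂ ℂ)
    (compCLMOfContinuousLinearEquiv ℂ (ContinuousLinearEquiv.neg ℝ) g)

theorem fourier_correlation_apply (g φ : 𝓢(E, ℂ)) (ξ : E) :
    𝓕 (correlation g φ) ξ = 𝓕 g (-ξ) * 𝓕 φ ξ := by
  rw [correlation, fourier_convolution, pairing_apply_apply, ContinuousLinearMap.mul_apply',
    fourier_coe, fourier_coe, fourier_coe]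
  congr 1
  exact Real.fourier_comp_linearIsometry (LinearIsometryEquiv.neg ℝ) g ξ

theorem correlation_apply (g φ : 𝓢(E, ℂ)) (x : E) :
    correlation g φ x = ∫ y, g y * φ (x + y) := by
  rw [correlation, convolution_apply, convolution_def, ← integral_neg_eq_self]
  simp [sub_eq_add_neg]

theorem correlation_resolvent {g h : 𝓢(E, ℂ)} {μ : ℝ}
    (hgh : ∀ ξ, 𝓕 h ξ = 𝓕 g ξ + μ * (𝓕 h ξ * 𝓕 g ξ)) (φ : 𝓢(E, ℂ)) :
    correlation h φ = correlation g φ + μ • correlation h (correlation g φ) ∧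
      correlation h φ = correlation g φ + μ • correlation g (correlation h φ) := by
  constructor <;>
  · apply (fourierEquiv ℂ 𝓢(E, ℂ)).injective
    ext ξ
    simp only [fourierEquiv_apply, fourier_correlation_apply, FourierAdd.fourier_add, fourier_smul,
      add_apply, smul_apply, Complex.real_smul]
    linear_combination 𝓕 φ ξ * hgh (-ξ)

end Fourier

end SchwartzMap

open SchwartzMap

theorem tempered_distribution_resolvent_general
    (conv : 𝓢(ℝ, ℂ) → (𝓢(ℝ, ℂ) →L[ℝ] ℂ) → (𝓢(ℝ, ℂ) →L[ℝ] ℂ))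
    (hconv : ∀ (g : 𝓢(ℝ, ℂ)) (T : 𝓢(ℝ, ℂ) →L[ℝ] ℂ) (φ ψ : 𝓢(ℝ, ℂ)),
      (∀ x : ℝ, ψ x = ∫ y : ℝ, g y * φ (x + y)) → (conv g T) φ = T ψ)
    (ω₁ : 𝓢(ℝ, ℂ)) (μ : ℝ)
    (hμ : ∀ ξ : ℝ, μ * (𝓕 (ω₁ : ℝ → ℂ) ξ).re < 1) :
    ∀ I : 𝓢(ℝ, ℂ) →L[ℝ] ℂ,
      (∃! b : 𝓢(ℝ, ℂ) →L[ℝ] ℂ, b = I + μ • conv ω₁ b) ∧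
      ∃ K : 𝓢(ℝ, ℂ),
        (∀ ξ : ℝ, 𝓕 (K : ℝ → ℂ) ξ
          = 𝓕 (ω₁ : ℝ → ℂ) ξ / (1 - (μ : ℂ) * 𝓕 (ω₁ : ℝ → ℂ) ξ)) ∧
        ∀ b : 𝓢(ℝ, ℂ) →L[ℝ] ℂ, b = I + μ • conv ω₁ b → b = I + μ • conv K I := by
  intro I
  have hμω : ∀ ξ, (μ : ℂ) * 𝓕 (ω₁ : ℝ → ℂ) ξ ≠ 1 := fun ξ h ↦ by
    have hre := congrArg Complex.re h
    simp only [Complex.re_ofReal_mul, Complex.one_re] at hre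
    linarith [hμ ξ]
  obtain ⟨K, hFK⟩ := exists_fourier_eq_div_one_sub ω₁ μ hμω
  have hresolvent : ∀ ξ, 𝓕 K ξ = 𝓕 ω₁ ξ + μ * (𝓕 K ξ * 𝓕 ω₁ ξ) := fun ξ ↦ by
    rw [fourier_coe, fourier_coe, hFK, div_eq_mul_inv]
    linear_combination 𝓕 (ω₁ : ℝ → ℂ) ξ * mul_inv_cancel₀ (sub_ne_zero.2 (hμω ξ).symm)
  have hconv_correlation : ∀ g T φ, conv g T φ = T (correlation g φ) :=
    fun g T φ ↦ hconv g T φ _ (correlation_apply g φ)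
  have hsolution_iff : ∀ b, b = I + μ • conv ω₁ b ↔ b = I + μ • conv K I := fun b ↦ by
    simp only [ContinuousLinearMap.ext_iff, _root_.add_apply, _root_.smul_apply,
      hconv_correlation]
    exact forall_eq_add_smul_iff_of_resolvent (A := (correlation ω₁).restrictScalars ℝ)
      (B := (correlation K).restrictScalars ℝ) (fun φ ↦ (correlation_resolvent hresolvent φ).1)
      (fun φ ↦ (correlation_resolvent hresolvent φ).2) b I
  exact ⟨⟨_, (hsolution_iff _).2 rfl, fun b hb ↦ (hsolution_iff b).1 hb⟩, K, hFK,
    fun b hb ↦ (hsolution_iff b).1 hb⟩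

/-- If `ω₁ ∈ 𝒮(ℝ)` has real Fourier transform with `μ ω̂₁ < 1` everywhere, then for every
tempered distribution `I` there is a unique tempered distribution `b` with
`b = I + μ ω₁ ∗ b`, and it is given by `b = I + μ K ∗ I` where `K ∈ 𝒮(ℝ)` has Fourier
transform `K̂ = ω̂₁/(1 − μ ω̂₁)`. Convolution of a Schwartz function with a tempered
distribution is encoded by its defining property `(g ∗ T)(φ) = T(x ↦ ∫ g(y) φ(x+y) dy)`. -/
theorem tempered_distribution_resolvent
    (conv : 𝓢(ℝ, ℂ) → (𝓢(ℝ, ℂ) →L[ℝ] ℂ) → (𝓢(ℝ, ℂ) →L[ℝ] ℂ))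
    (hconv : ∀ (g : 𝓢(ℝ, ℂ)) (T : 𝓢(ℝ, ℂ) →L[ℝ] ℂ) (φ ψ : 𝓢(ℝ, ℂ)),
      (∀ x : ℝ, ψ x = ∫ y : ℝ, g y * φ (x + y)) → (conv g T) φ = T ψ)
    (ω₁ : 𝓢(ℝ, ℂ)) (μ : ℝ) (hμ0 : 0 < μ)
    (hreal : ∀ ξ : ℝ, (𝓕 (ω₁ : ℝ → ℂ) ξ).im = 0)
    (hμ : ∀ ξ : ℝ, μ * (𝓕 (ω₁ : ℝ → ℂ) ξ).re < 1) :
    ∀ I : 𝓢(ℝ, ℂ) →L[ℝ] ℂ,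
      (∃! b : 𝓢(ℝ, ℂ) →L[ℝ] ℂ, b = I + μ • conv ω₁ b) ∧
      ∃ K : 𝓢(ℝ, ℂ),
        (∀ ξ : ℝ, 𝓕 (K : ℝ → ℂ) ξ
          = 𝓕 (ω₁ : ℝ → ℂ) ξ / (1 - (μ : ℂ) * 𝓕 (ω₁ : ℝ → ℂ) ξ)) ∧
        ∀ b : 𝓢(ℝ, ℂ) →L[ℝ] ℂ, b = I + μ • conv ω₁ b → b = I + μ • conv K I :=
  tempered_distribution_resolvent_general conv hconv ω₁ μ hμ
end

section
/- Let h(z) = 1 − e^{−z²} + e^{−2z²} for z ∈ ℂ. Then the zeros of h in ℂ are exactly the points c_k e^{iπ/4} i^ℓ √(π/3) and d_k e^{iπ/4} i^ℓ √(π/3), where ℓ ∈ {0,1,2,3}, c_k = √(1+6k) for k ∈ ℕ, and d_k = √(−1+6k) for k ∈ ℕ with k ≥ 1, and all these zeros are simple. -/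
/-!
With `w = e^{-z²}` the function is `1 - w + w²`, whose roots are `e^{±iπ/3}`; hence the zeros are
the `z` with `z² = m · iπ/3` for an integer `m ≡ ±1 (mod 6)`. Writing `|m| = 6k ± 1`, the square
roots of `±|m| · iπ/3` are the four points `√|m| e^{iπ/4} iˡ √(π/3)`. The derivative is
`2z w (1 - 2w)`, which vanishes at a zero only if `z = 0` or `w = 1/2`, and neither gives a zero.
-/

open Complex
open scoped Real

lemma one_sub_add_sq_eq_zero_iff (w : ℂ) :
    1 - w + w ^ 2 = 0 ↔ w = exp (π / 3 * I) ∨ w = exp (-(π / 3) * I) := by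
  have hsum : exp (π / 3 * I) + exp (-(π / 3) * I) = 1 := by
    rw [← two_cos]
    have : Complex.cos (π / 3) = 1 / 2 := by
      have h := congrArg ofReal Real.cos_pi_div_three
      push_cast at h
      exact h
    rw [this]; norm_num
  have hprod : exp (π / 3 * I) * exp (-(π / 3) * I) = 1 := by
    rw [← exp_add, neg_mul, add_neg_cancel, exp_zero]
  rw [← sub_eq_zero (a := w), ← sub_eq_zero (a := w), ← mul_eq_zero]
  constructor <;> intro h
  · linear_combination h - w * hsum + hprod
  · linear_combination h + w * hsum - hprod

lemma exp_neg_two_mul (x : ℂ) : exp (-2 * x) = exp (-x) ^ 2 := by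
  rw [sq, ← exp_add]; ring_nf

lemma exp_poly_eq_zero_iff (z : ℂ) :
    1 - exp (-z ^ 2) + exp (-2 * z ^ 2) = 0 ↔
      ∃ n : ℤ, z ^ 2 = (1 + 6 * n) * (π / 3 * I) ∨ z ^ 2 = (-1 + 6 * n) * (π / 3 * I) := by
  rw [exp_neg_two_mul, one_sub_add_sq_eq_zero_iff, exp_eq_exp_iff_exists_int,
    exp_eq_exp_iff_exists_int, ← exists_or, (Equiv.neg ℤ).exists_congr_left]
  refine exists_congr fun n => ?_
  rw [or_comm]
  simp only [Equiv.neg_symm, Equiv.neg_apply, Int.cast_neg]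
  constructor <;> rintro (h | h) <;> [left; right; left; right] <;> linear_combination -h

lemma exists_int_one_or_neg_one_add_six_mul_iff (p : ℤ → Prop) :
    (∃ n : ℤ, p (1 + 6 * n) ∨ p (-1 + 6 * n)) ↔
      (∃ k : ℕ, p (1 + 6 * k) ∨ p (-(1 + 6 * k))) ∨
        ∃ k : ℕ, 1 ≤ k ∧ (p (-1 + 6 * k) ∨ p (-(-1 + 6 * k))) := by
  constructor
  · rintro ⟨n, h⟩
    obtain ⟨k, rfl | rfl⟩ := Int.eq_nat_or_neg n
    · rcases h with h | h
      · exact Or.inl ⟨k, Or.inl h⟩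
      · rcases Nat.eq_zero_or_pos k with rfl | hk
        · exact Or.inl ⟨0, Or.inr (by simpa using h)⟩
        · exact Or.inr ⟨k, hk, Or.inl h⟩
    · rcases h with h | h
      · rcases Nat.eq_zero_or_pos k with rfl | hk
        · exact Or.inl ⟨0, Or.inl (by simpa using h)⟩
        · exact Or.inr ⟨k, hk, Or.inr (by convert h using 1; ring)⟩
      · exact Or.inl ⟨k, Or.inr (by convert h using 1; ring)⟩
  · rintro (⟨k, h | h⟩ | ⟨k, -, h | h⟩)
    · exact ⟨k, Or.inl h⟩
    · exact ⟨-k, Or.inr (by convert h using 1; ring)⟩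
    · exact ⟨k, Or.inr h⟩
    · exact ⟨-k, Or.inl (by convert h using 1; ring)⟩

lemma exists_fin_four_eq_mul_I_pow_iff (z a : ℂ) :
    (∃ ℓ : Fin 4, z = a * I ^ (ℓ : ℕ)) ↔ z ^ 2 = a ^ 2 ∨ z ^ 2 = -a ^ 2 := by
  constructor
  · rintro ⟨ℓ, rfl⟩
    fin_cases ℓ <;> simp [mul_pow]
  · rintro (h | h)
    · rcases sq_eq_sq_iff_eq_or_eq_neg.1 h with rfl | rfl
      · exact ⟨0, by simp⟩
      · exact ⟨2, by simp⟩
    · have h' : z ^ 2 = (a * I) ^ 2 := by rw [h, mul_pow, I_sq, mul_neg_one]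
      rcases sq_eq_sq_iff_eq_or_eq_neg.1 h' with rfl | rfl
      · exact ⟨1, by simp⟩
      · exact ⟨3, by simp [pow_succ]⟩

lemma sq_sqrt_mul_exp_pi_div_four_mul_sqrt {r : ℝ} (hr : 0 ≤ r) :
    ((√r : ℂ) * exp (π * I / 4) * (√(π / 3) : ℝ)) ^ 2 = r * (π / 3 * I) := by
  have hexp : exp (π * I / 4) ^ 2 = I := by
    rw [sq, ← Complex.exp_add]
    convert exp_pi_div_two_mul_I using 2
    ring
  rw [mul_pow, mul_pow, hexp, ← ofReal_pow, ← ofReal_pow, Real.sq_sqrt hr, Real.sq_sqrt (by positivity)]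
  push_cast; ring

lemma exists_fin_four_eq_sqrt_mul_iff (z : ℂ) {r : ℝ} (hr : 0 ≤ r) :
    (∃ ℓ : Fin 4, z = (√r : ℂ) * exp (π * I / 4) * I ^ (ℓ : ℕ) * (√(π / 3) : ℝ)) ↔
      z ^ 2 = r * (π / 3 * I) ∨ z ^ 2 = -r * (π / 3 * I) := by
  rw [neg_mul, ← sq_sqrt_mul_exp_pi_div_four_mul_sqrt hr, ← exists_fin_four_eq_mul_I_pow_iff]
  simp only [mul_right_comm _ (I ^ _)]

lemma hasDerivAt_exp_poly (z : ℂ) :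
    HasDerivAt (fun w : ℂ => 1 - exp (-w ^ 2) + exp (-2 * w ^ 2))
      (2 * z * exp (-z ^ 2) * (1 - 2 * exp (-z ^ 2))) z := by
  have h₁ : HasDerivAt (fun w : ℂ => -w ^ 2) (-(2 * z)) z := by
    simpa using ((hasDerivAt_pow 2 z).const_mul (-1 : ℂ))
  have h₂ : HasDerivAt (fun w : ℂ => -2 * w ^ 2) (-2 * (2 * z)) z := by
    simpa using (hasDerivAt_pow 2 z).const_mul (-2 : ℂ)
  refine (((hasDerivAt_const z (1 : ℂ)).sub h₁.cexp).add h₂.cexp).congr_deriv ?_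
  rw [exp_neg_two_mul]; ring

/-- The zeros of `h(z) = 1 − e^{−z²} + e^{−2z²}` are exactly the points
`c_k e^{iπ/4} i^ℓ √(π/3)` and `d_k e^{iπ/4} i^ℓ √(π/3)`, `ℓ ∈ {0,1,2,3}`,
`c_k = √(1+6k)` (`k ∈ ℕ`), `d_k = √(−1+6k)` (`k ≥ 1`), and all zeros are simple. -/
theorem zeros_exponential_polynomial :
    (∀ z : ℂ,
      (1 - Complex.exp (-z ^ 2) + Complex.exp (-2 * z ^ 2) = 0 ↔
        ∃ ℓ : Fin 4,
          (∃ k : ℕ, z = (Real.sqrt (1 + 6 * (k : ℝ)) : ℝ)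
              * Complex.exp (Real.pi * Complex.I / 4) * Complex.I ^ (ℓ : ℕ)
              * (Real.sqrt (Real.pi / 3) : ℝ)) ∨
          (∃ k : ℕ, 1 ≤ k ∧ z = (Real.sqrt (-1 + 6 * (k : ℝ)) : ℝ)
              * Complex.exp (Real.pi * Complex.I / 4) * Complex.I ^ (ℓ : ℕ)
              * (Real.sqrt (Real.pi / 3) : ℝ)))) ∧
    ∀ z : ℂ, 1 - Complex.exp (-z ^ 2) + Complex.exp (-2 * z ^ 2) = 0 →
      deriv (fun w : ℂ => 1 - Complex.exp (-w ^ 2) + Complex.exp (-2 * w ^ 2)) z ≠ 0 := by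
  refine ⟨fun z => ?_, fun z hz => ?_⟩
  · have h := exists_int_one_or_neg_one_add_six_mul_iff fun m : ℤ => z ^ 2 = m * (π / 3 * I)
    push_cast at h
    rw [exp_poly_eq_zero_iff, h]
    conv_rhs => rw [exists_or, exists_comm, exists_comm (p := fun ℓ k => 1 ≤ k ∧ _)]
    simp only [exists_and_left]
    refine or_congr (exists_congr fun k => ?_) (exists_congr fun k => and_congr_right fun hk => ?_)
    · rw [exists_fin_four_eq_sqrt_mul_iff z (by positivity)]
      push_cast; rfl
    · have hk' : (1 : ℝ) ≤ k := by exact_mod_cast hk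
      rw [exists_fin_four_eq_sqrt_mul_iff z (by linarith)]
      push_cast; rfl
  · rw [(hasDerivAt_exp_poly z).deriv]
    rw [exp_neg_two_mul] at hz
    have hz₀ : z ≠ 0 := by rintro rfl; norm_num at hz
    have hw : 1 - 2 * exp (-z ^ 2) ≠ 0 := by
      intro h
      have : (3 : ℂ) / 4 = 0 := by linear_combination hz - (1 - 2 * exp (-z ^ 2)) / 4 * h
      norm_num at this
    exact mul_ne_zero (mul_ne_zero (mul_ne_zero two_ne_zero hz₀) (exp_ne_zero _)) hw
end

section
/- Let ω(x) = (2πσ₁²)⁻¹e^{−|x|²/(2σ₁²)} − κ(2πσ₂²)⁻¹e^{−|x|²/(2σ₂²)} on ℝ² with κ > 0, 0 < σ₁ < σ₂, and σ₁√κ < σ₂. Then ‖ω‖_{L¹(ℝ²)} = (1−κ) + 2(κ e^{−Θ²/(2σ₂²)} − e^{−Θ²/(2σ₁²)}), where Θ = σ₁σ₂ √( 2 log(σ₂²/(κσ₁²)) / (σ₂² − σ₁²) ). -/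
/-!
With `g_σ` the centred planar Gaussian density, `ω = g_{σ₁} - κ g_{σ₂}`, and the identity
`κ g_{σ₂}(r) = g_{σ₁}(r) · exp ((r² - Θ²)(σ₂² - σ₁²) / (2σ₁²σ₂²))` shows that `ω ≥ 0` on the
disc `|x| ≤ Θ` and `ω ≤ 0` outside it. Hence `∫ |ω| = ∫ ω - 2 ∫_{|x| > Θ} ω`, and in polar
coordinates `∫ g_σ = 1` and `∫_{|x| > R} g_σ = e^{-R²/(2σ²)}`.
-/

open MeasureTheory Set Filter Real

local notation "ℝ²" => EuclideanSpace ℝ (Fin 2)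

theorem integral_abs_eq_integral_sub_two_mul_setIntegral {α : Type*} [MeasurableSpace α]
    {μ : Measure α} {f : α → ℝ} {s : Set α} (hf : Integrable f μ) (hs : MeasurableSet s)
    (hneg : ∀ x ∈ s, f x ≤ 0) (hpos : ∀ x ∉ s, 0 ≤ f x) :
    ∫ x, |f x| ∂μ = ∫ x, f x ∂μ - 2 * ∫ x in s, f x ∂μ := by
  have h_in : ∫ x in s, |f x| ∂μ = -∫ x in s, f x ∂μ := by
    rw [← integral_neg]
    exact setIntegral_congr_fun hs fun x hx => abs_of_nonpos (hneg x hx)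
  have h_out : ∫ x in sᶜ, |f x| ∂μ = ∫ x in sᶜ, f x ∂μ :=
    setIntegral_congr_fun hs.compl fun x hx => abs_of_nonneg (hpos x hx)
  rw [← integral_add_compl hs hf, ← integral_add_compl hs hf.abs, h_in, h_out]
  ring

theorem integral_fun_norm_euclideanSpace_fin_two (f : ℝ → ℝ) :
    ∫ x : ℝ², f ‖x‖ = 2 * π * ∫ y in Ioi 0, y * f y := by
  rw [integral_fun_norm_addHaar, measureReal_def, EuclideanSpace.volume_ball_fin_two,
    finrank_euclideanSpace_fin]
  simp [ENNReal.toReal_ofReal pi_pos.le, mul_assoc]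

theorem integrable_fun_norm_euclideanSpace_fin_two {f : ℝ → ℝ} :
    Integrable (fun x : ℝ² => f ‖x‖) ↔ IntegrableOn (fun y => y * f y) (Ioi 0) := by
  rw [integrable_fun_norm_addHaar, finrank_euclideanSpace_fin]
  simp

theorem setIntegral_fun_norm_euclideanSpace_fin_two (f : ℝ → ℝ) {R : ℝ} (hR : 0 ≤ R) :
    ∫ x in {x : ℝ² | R < ‖x‖}, f ‖x‖ = 2 * π * ∫ y in Ioi R, y * f y := by
  have hS : MeasurableSet {x : ℝ² | R < ‖x‖} := measurableSet_lt measurable_const measurable_norm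
  have h_ind : ∀ x : ℝ², {x : ℝ² | R < ‖x‖}.indicator (fun x => f ‖x‖) x
      = (Ioi R).indicator f ‖x‖ := fun x => rfl
  have h_mul : ∀ y, y * (Ioi R).indicator f y = (Ioi R).indicator (fun y => y * f y) y :=
    fun y => ((Ioi R).indicator_mul_right (fun y => y) f).symm
  rw [← integral_indicator hS, funext h_ind, integral_fun_norm_euclideanSpace_fin_two,
    funext h_mul, integral_indicator measurableSet_Ioi, Measure.restrict_restrict measurableSet_Ioi,
    Ioi_inter_Ioi, max_eq_left hR]

theorem integrable_mul_exp_neg_sq_div {σ : ℝ} (hσ : σ ≠ 0) :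
    Integrable fun y : ℝ => y * exp (-y ^ 2 / (2 * σ ^ 2)) := by
  have := integrable_mul_exp_neg_mul_sq (b := (2 * σ ^ 2)⁻¹) (by positivity)
  convert this using 4
  ring

theorem integral_Ioi_mul_exp_neg_sq_div {σ : ℝ} (hσ : σ ≠ 0) (R : ℝ) :
    ∫ y in Ioi R, y * exp (-y ^ 2 / (2 * σ ^ 2)) = σ ^ 2 * exp (-R ^ 2 / (2 * σ ^ 2)) := by
  have h_deriv (y : ℝ) : HasDerivAt (fun y => -σ ^ 2 * exp (-y ^ 2 / (2 * σ ^ 2)))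
      (y * exp (-y ^ 2 / (2 * σ ^ 2))) y := by
    have h_arg : HasDerivAt (fun y : ℝ => -y ^ 2 / (2 * σ ^ 2)) (-(2 * y) / (2 * σ ^ 2)) y := by
      simpa using (hasDerivAt_pow 2 y).neg.div_const (2 * σ ^ 2)
    refine (h_arg.exp.const_mul (-σ ^ 2)).congr_deriv ?_
    field_simp
  have h_lim : Tendsto (fun y => -σ ^ 2 * exp (-y ^ 2 / (2 * σ ^ 2))) atTop (nhds 0) := by
    have h_exp : Tendsto (fun y : ℝ => -y ^ 2 / (2 * σ ^ 2)) atTop atBot := by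
      simp_rw [neg_div]
      exact tendsto_neg_atTop_atBot.comp
        ((tendsto_pow_atTop two_ne_zero).atTop_div_const (by positivity))
    simpa using (tendsto_exp_atBot.comp h_exp).const_mul (-σ ^ 2)
  rw [integral_Ioi_of_hasDerivAt_of_tendsto (h_deriv R).continuousAt.continuousWithinAt
    (fun y _ => h_deriv y) (integrable_mul_exp_neg_sq_div hσ).integrableOn h_lim]
  ring

/-- The density of the centred Gaussian on `ℝ²` with covariance `σ² I`, at a point of norm `r`. -/
noncomputable def planarGaussian (σ r : ℝ) : ℝ := (2 * π * σ ^ 2)⁻¹ * exp (-r ^ 2 / (2 * σ ^ 2))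

theorem integral_Ioi_mul_planarGaussian {σ : ℝ} (hσ : σ ≠ 0) (R : ℝ) :
    2 * π * ∫ y in Ioi R, y * planarGaussian σ y = exp (-R ^ 2 / (2 * σ ^ 2)) := by
  simp_rw [planarGaussian, mul_left_comm _ (2 * π * σ ^ 2)⁻¹]
  rw [integral_const_mul, integral_Ioi_mul_exp_neg_sq_div hσ]
  field_simp

theorem integrable_planarGaussian {σ : ℝ} (hσ : σ ≠ 0) :
    Integrable fun x : ℝ² => planarGaussian σ ‖x‖ := by
  rw [integrable_fun_norm_euclideanSpace_fin_two]
  simp_rw [planarGaussian, mul_left_comm _ (2 * π * σ ^ 2)⁻¹]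
  exact ((integrable_mul_exp_neg_sq_div hσ).const_mul _).integrableOn

theorem integral_planarGaussian {σ : ℝ} (hσ : σ ≠ 0) :
    ∫ x : ℝ², planarGaussian σ ‖x‖ = 1 := by
  rw [integral_fun_norm_euclideanSpace_fin_two, integral_Ioi_mul_planarGaussian hσ]
  simp

theorem setIntegral_planarGaussian_norm_gt {σ R : ℝ} (hσ : σ ≠ 0) (hR : 0 ≤ R) :
    ∫ x in {x : ℝ² | R < ‖x‖}, planarGaussian σ ‖x‖ = exp (-R ^ 2 / (2 * σ ^ 2)) := by
  rw [setIntegral_fun_norm_euclideanSpace_fin_two _ hR, integral_Ioi_mul_planarGaussian hσ]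

noncomputable def dogRadius (κ σ1 σ2 : ℝ) : ℝ :=
  σ1 * σ2 * √(2 * log (σ2 ^ 2 / (κ * σ1 ^ 2)) / (σ2 ^ 2 - σ1 ^ 2))

theorem dogRadius_sq_mul {κ σ1 σ2 : ℝ} (hκ : 0 < κ) (hσ1 : σ1 ≠ 0) (h12 : σ1 ^ 2 < σ2 ^ 2)
    (hbal : κ * σ1 ^ 2 ≤ σ2 ^ 2) :
    dogRadius κ σ1 σ2 ^ 2 * ((σ2 ^ 2 - σ1 ^ 2) / (2 * σ1 ^ 2 * σ2 ^ 2))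
      = log (σ2 ^ 2 / (κ * σ1 ^ 2)) := by
  have h_log : 0 ≤ log (σ2 ^ 2 / (κ * σ1 ^ 2)) :=
    log_nonneg ((one_le_div (by positivity)).mpr hbal)
  have h_gap : 0 < σ2 ^ 2 - σ1 ^ 2 := sub_pos.mpr h12
  have hσ2 : σ2 ≠ 0 := by rintro rfl; nlinarith
  rw [dogRadius, mul_pow, mul_pow, sq_sqrt (by positivity)]
  field_simp

theorem mul_planarGaussian_eq {κ σ1 σ2 : ℝ} (hκ : 0 < κ) (hσ1 : σ1 ≠ 0) (h12 : σ1 ^ 2 < σ2 ^ 2)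
    (hbal : κ * σ1 ^ 2 ≤ σ2 ^ 2) (r : ℝ) :
    κ * planarGaussian σ2 r = planarGaussian σ1 r *
      exp ((r ^ 2 - dogRadius κ σ1 σ2 ^ 2) * ((σ2 ^ 2 - σ1 ^ 2) / (2 * σ1 ^ 2 * σ2 ^ 2))) := by
  have hσ2 : σ2 ≠ 0 := by rintro rfl; nlinarith
  rw [sub_mul, dogRadius_sq_mul hκ hσ1 h12 hbal, exp_sub, exp_log (by positivity), planarGaussian,
    planarGaussian, mul_div, mul_assoc _ (exp _), ← exp_add]
  have h_exponent : -r ^ 2 / (2 * σ1 ^ 2) + r ^ 2 * ((σ2 ^ 2 - σ1 ^ 2) / (2 * σ1 ^ 2 * σ2 ^ 2))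
      = -r ^ 2 / (2 * σ2 ^ 2) := by
    field_simp
    ring
  rw [h_exponent]
  field_simp

theorem planarGaussian_sub_mul_nonneg {κ σ1 σ2 r : ℝ} (hκ : 0 < κ) (hσ1 : σ1 ≠ 0)
    (h12 : σ1 ^ 2 < σ2 ^ 2) (hbal : κ * σ1 ^ 2 ≤ σ2 ^ 2) (hr : 0 ≤ r)
    (hrΘ : r ≤ dogRadius κ σ1 σ2) :
    0 ≤ planarGaussian σ1 r - κ * planarGaussian σ2 r := by
  have h_rate : 0 ≤ (σ2 ^ 2 - σ1 ^ 2) / (2 * σ1 ^ 2 * σ2 ^ 2) :=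
    div_nonneg (sub_nonneg.mpr h12.le) (by positivity)
  have h_exp : exp ((r ^ 2 - dogRadius κ σ1 σ2 ^ 2) * ((σ2 ^ 2 - σ1 ^ 2) / (2 * σ1 ^ 2 * σ2 ^ 2)))
      ≤ 1 :=
    exp_le_one_iff.mpr (mul_nonpos_of_nonpos_of_nonneg (by nlinarith) h_rate)
  rw [mul_planarGaussian_eq hκ hσ1 h12 hbal, ← mul_one_sub]
  exact mul_nonneg (by unfold planarGaussian; positivity) (sub_nonneg.mpr h_exp)

theorem planarGaussian_sub_mul_nonpos {κ σ1 σ2 r : ℝ} (hκ : 0 < κ) (hσ1 : 0 < σ1)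
    (h12 : σ1 < σ2) (hbal : κ * σ1 ^ 2 ≤ σ2 ^ 2) (hrΘ : dogRadius κ σ1 σ2 < r) :
    planarGaussian σ1 r - κ * planarGaussian σ2 r ≤ 0 := by
  have h12' : σ1 ^ 2 < σ2 ^ 2 := by gcongr
  have hΘ : 0 ≤ dogRadius κ σ1 σ2 := by unfold dogRadius; have := hσ1.trans h12; positivity
  have h_rate : 0 ≤ (σ2 ^ 2 - σ1 ^ 2) / (2 * σ1 ^ 2 * σ2 ^ 2) :=
    div_nonneg (sub_nonneg.mpr h12'.le) (by positivity)
  have h_exp : 1 ≤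
      exp ((r ^ 2 - dogRadius κ σ1 σ2 ^ 2) * ((σ2 ^ 2 - σ1 ^ 2) / (2 * σ1 ^ 2 * σ2 ^ 2))) :=
    one_le_exp (mul_nonneg (by nlinarith) h_rate)
  rw [mul_planarGaussian_eq hκ hσ1.ne' h12' hbal, ← mul_one_sub]
  exact mul_nonpos_of_nonneg_of_nonpos (by unfold planarGaussian; positivity)
    (sub_nonpos.mpr h_exp)

/-- The `L¹(ℝ²)` norm of the DoG kernel
`ω(x) = (2πσ₁²)⁻¹e^{−|x|²/(2σ₁²)} − κ(2πσ₂²)⁻¹e^{−|x|²/(2σ₂²)}` (with `κ > 0`,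
`0 < σ₁ < σ₂`, `σ₁√κ < σ₂`) equals
`(1−κ) + 2(κ e^{−Θ²/(2σ₂²)} − e^{−Θ²/(2σ₁²)})` with
`Θ = σ₁σ₂√(2 log(σ₂²/(κσ₁²))/(σ₂²−σ₁²))`. -/
theorem L1_norm_DoG (κ σ1 σ2 : ℝ) (hκ : 0 < κ) (h1 : 0 < σ1) (h12 : σ1 < σ2)
    (hbal : σ1 * Real.sqrt κ < σ2) :
    let ω : EuclideanSpace ℝ (Fin 2) → ℝ := fun x =>
      (2 * π * σ1 ^ 2)⁻¹ * Real.exp (-‖x‖ ^ 2 / (2 * σ1 ^ 2))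
        - κ * (2 * π * σ2 ^ 2)⁻¹ * Real.exp (-‖x‖ ^ 2 / (2 * σ2 ^ 2))
    let Θ : ℝ := σ1 * σ2 * Real.sqrt (2 * Real.log (σ2 ^ 2 / (κ * σ1 ^ 2)) / (σ2 ^ 2 - σ1 ^ 2))
    (∫ x, |ω x|) = (1 - κ)
      + 2 * (κ * Real.exp (-Θ ^ 2 / (2 * σ2 ^ 2)) - Real.exp (-Θ ^ 2 / (2 * σ1 ^ 2))) := by
  intro ω Θ
  rw [show Θ = dogRadius κ σ1 σ2 from rfl]
  have hσ2 : 0 < σ2 := h1.trans h12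
  have hΘ : 0 ≤ dogRadius κ σ1 σ2 := by unfold dogRadius; positivity
  have hκσ : κ * σ1 ^ 2 ≤ σ2 ^ 2 := by
    nlinarith [mul_self_lt_mul_self (by positivity) hbal, sq_sqrt hκ.le]
  have hω : ∀ x, ω x = planarGaussian σ1 ‖x‖ - κ * planarGaussian σ2 ‖x‖ := fun x => by
    simp only [ω, planarGaussian, mul_assoc]
  have hg1 := integrable_planarGaussian h1.ne'
  have hg2 := (integrable_planarGaussian hσ2.ne').const_mul κ
  have hg : Integrable fun x : ℝ² => planarGaussian σ1 ‖x‖ - κ * planarGaussian σ2 ‖x‖ :=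
    hg1.sub hg2
  simp only [hω]
  rw [integral_abs_eq_integral_sub_two_mul_setIntegral hg
      (measurableSet_lt measurable_const measurable_norm)
      (fun x hx => planarGaussian_sub_mul_nonpos hκ h1 h12 hκσ hx)
      (fun x hx => planarGaussian_sub_mul_nonneg hκ h1.ne' (by gcongr) hκσ (norm_nonneg x)
        (not_lt.mp hx)),
    integral_sub hg1 hg2, integral_const_mul, integral_sub hg1.integrableOn hg2.integrableOn,
    integral_const_mul, integral_planarGaussian h1.ne', integral_planarGaussian hσ2.ne',
    setIntegral_planarGaussian_norm_gt h1.ne' hΘ, setIntegral_planarGaussian_norm_gt hσ2.ne' hΘ]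
  ring
end
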